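/- arXiv:0807.1072 — 2 statements merged into one kernel-verified Lean document; each statement's English description precedes it below -/
import Mathlib

section
/- Let E = ℝ^m and let the signal be given by the recursion X_{k+1} = b(X_k) + σ(X_k)η_k, where b : ℝ^m → ℝ^m and σ : ℝ^m → ℝ^{m×m} are uniformly continuous, ‖σ(x)v‖ ≥ α‖v‖ for all x, v ∈ ℝ^m and some α > 0, and (η_k) are i.i.d. ℝ^m-valued random variables whose law has a density q_η with respect to Lebesgue measure on ℝ^m. Then the associated transition kernel P(x,·) = law of b(x) + σ(x)η_0 satisfies: ‖P(x_k,·) − P(y_k,·)‖_TV → 0 whenever ‖x_k − y_k‖ → 0. -/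
/-!
The kernel `P x` is the pushforward of the noise law `q · λ` under `z ↦ b x + σ x z`. Put
`A = σ x`, `B = σ y`, `Φ = A⁻¹ B`, `c = A⁻¹ (b y - b x)`. The law `q · λ` is itself the
pushforward, under `T w = Φ w + c`, of the density `|det Φ| · q ∘ T`, and
`b x + A (T w) = b y + B w`. So `P x` and `P y` are pushforwards under one and the same map
of two measures with densities, and their total variation distance is at most
`‖|det Φ| · q ∘ T - q‖₁`.

Since `‖σ x v‖ ≥ α ‖v‖`, the inverse `(σ x)⁻¹` has norm at most `α⁻¹`, so uniform
continuity of `b` and `σ` gives `Φ → 1` and `c → 0` along `(x k, y k)`. It remains to see that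
`q ↦ |det Φ| · q ∘ T` is continuous in `L¹` at `T = id`. For continuous compactly supported `q`
this is dominated convergence. In general one approximates `q` by such functions, using that
`q ↦ |det Φ| · q ∘ T` is an `L¹` isometry.
-/

open MeasureTheory ProbabilityTheory Filter
open scoped ENNReal NNReal Topology

noncomputable section

/-- Total variation distance between two measures. -/
def tvDist {S : Type*} [MeasurableSpace S] (ρ ρ' : Measure S) : ℝ :=
  sSup { r : ℝ | ∃ f : S → ℝ, Measurable f ∧ (∀ x, |f x| ≤ 1) ∧
    r = |(∫ x, f x ∂ρ) - ∫ x, f x ∂ρ'| }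

section TotalVariation

variable {S : Type*} [MeasurableSpace S]

lemma tvDist_nonneg (ρ ρ' : Measure S) : 0 ≤ tvDist ρ ρ' :=
  Real.sSup_nonneg <| by rintro _ ⟨f, -, -, rfl⟩; exact abs_nonneg _

lemma tvDist_le {ρ ρ' : Measure S} {C : ℝ} (hC : 0 ≤ C)
    (h : ∀ f : S → ℝ, Measurable f → (∀ x, |f x| ≤ 1) → |∫ x, f x ∂ρ - ∫ x, f x ∂ρ'| ≤ C) :
    tvDist ρ ρ' ≤ C :=
  Real.sSup_le (by rintro _ ⟨f, hf, hf1, rfl⟩; exact h f hf hf1) hC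

lemma abs_integral_withDensity_sub_le (μ : Measure S) {p p' f : S → ℝ}
    (hp : Measurable p) (hp' : Measurable p') (hp0 : ∀ x, 0 ≤ p x) (hp'0 : ∀ x, 0 ≤ p' x)
    (hpi : Integrable p μ) (hp'i : Integrable p' μ) (hf : Measurable f)
    (hf1 : ∀ x, |f x| ≤ 1) :
    |∫ x, f x ∂μ.withDensity (fun x => ENNReal.ofReal (p x)) -
        ∫ x, f x ∂μ.withDensity (fun x => ENNReal.ofReal (p' x))| ≤ ∫ x, |p x - p' x| ∂μ := by
  have integral_eq {p : S → ℝ} (hp : Measurable p) (hp0 : ∀ x, 0 ≤ p x) :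
      ∫ x, f x ∂μ.withDensity (fun x => ENNReal.ofReal (p x)) = ∫ x, p x * f x ∂μ := by
    simp_rw [ENNReal.ofReal, integral_withDensity_eq_integral_smul hp.real_toNNReal,
      NNReal.smul_def, Real.coe_toNNReal _ (hp0 _), smul_eq_mul]
  have hfi {p : S → ℝ} (hpi : Integrable p μ) : Integrable (fun x => p x * f x) μ :=
    hpi.mul_bdd hf.aestronglyMeasurable
      (ae_of_all _ fun x => (Real.norm_eq_abs _).trans_le (hf1 x))
  rw [integral_eq hp hp0, integral_eq hp' hp'0, ← integral_sub (hfi hpi) (hfi hp'i)]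
  calc |∫ x, (p x * f x - p' x * f x) ∂μ| ≤ ∫ x, |p x * f x - p' x * f x| ∂μ :=
        abs_integral_le_integral_abs
    _ ≤ ∫ x, |p x - p' x| ∂μ := by
        refine integral_mono_of_nonneg (ae_of_all _ fun _ => abs_nonneg _) (hpi.sub hp'i).abs
          (ae_of_all _ fun x => ?_)
        dsimp only
        rw [← sub_mul, abs_mul]
        exact mul_le_of_le_one_right (abs_nonneg _) (hf1 x)

lemma tvDist_map_withDensity_le (μ : Measure S) {T : Type*} [MeasurableSpace T] {h : S → T}
    (hh : Measurable h) {p p' : S → ℝ}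
    (hp : Measurable p) (hp' : Measurable p') (hp0 : ∀ x, 0 ≤ p x) (hp'0 : ∀ x, 0 ≤ p' x)
    (hpi : Integrable p μ) (hp'i : Integrable p' μ) :
    tvDist ((μ.withDensity fun x => ENNReal.ofReal (p x)).map h)
        ((μ.withDensity fun x => ENNReal.ofReal (p' x)).map h) ≤ ∫ x, |p x - p' x| ∂μ := by
  refine tvDist_le (integral_nonneg fun _ => abs_nonneg _) fun f hf hf1 => ?_
  rw [integral_map hh.aemeasurable hf.aestronglyMeasurable,
    integral_map hh.aemeasurable hf.aestronglyMeasurable]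
  exact abs_integral_withDensity_sub_le μ hp hp' hp0 hp'0 hpi hp'i (hf.comp hh) fun x => hf1 _

end TotalVariation

section AffinePullback

variable {E : Type*} [NormedAddCommGroup E] [NormedSpace ℝ E] [FiniteDimensional ℝ E]
  [MeasurableSpace E] [BorelSpace E] (μ : Measure E) [μ.IsAddHaarMeasure]

lemma map_affine_addHaar {Φ : E →L[ℝ] E} (hΦ : Φ.det ≠ 0) (c : E) :
    μ.map (fun w => Φ w + c) = ENNReal.ofReal |Φ.det|⁻¹ • μ := by
  change μ.map ((· + c) ∘ (Φ : E →ₗ[ℝ] E)) = _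
  rw [← Measure.map_map (measurable_add_const c)
      (Φ : E →ₗ[ℝ] E).continuous_of_finiteDimensional.measurable,
    Measure.map_linearMap_addHaar_eq_smul_addHaar μ hΦ, Measure.map_smul,
    map_add_right_eq_self, abs_inv, ContinuousLinearMap.det]

lemma integral_comp_affine {Φ : E →L[ℝ] E} (hΦ : Φ.det ≠ 0) (c : E) {h : E → ℝ}
    (hh : AEStronglyMeasurable h μ) :
    ∫ w, h (Φ w + c) ∂μ = |Φ.det|⁻¹ * ∫ z, h z ∂μ := by
  rw [← integral_map (by fun_prop) (by rw [map_affine_addHaar μ hΦ]; exact hh.smul_measure _),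
    map_affine_addHaar μ hΦ, integral_smul_measure, smul_eq_mul,
    ENNReal.toReal_ofReal (inv_nonneg.mpr (abs_nonneg _))]

lemma MeasureTheory.Integrable.comp_affine {Φ : E →L[ℝ] E} (hΦ : Φ.det ≠ 0) (c : E)
    {h : E → ℝ} (hh : Integrable h μ) : Integrable (fun w => h (Φ w + c)) μ := by
  refine (integrable_map_measure ?_ (by fun_prop)).mp ?_ <;> rw [map_affine_addHaar μ hΦ]
  · exact hh.aestronglyMeasurable.smul_measure _
  · exact hh.smul_measure ENNReal.ofReal_ne_top

/-- The density whose pushforward under `w ↦ Φ w + c` is `q` (for `Φ` invertible). -/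
def affinePullback (Φ : E →L[ℝ] E) (c : E) (q : E → ℝ) (w : E) : ℝ :=
  |Φ.det| * q (Φ w + c)

variable {μ} {Φ : E →L[ℝ] E} {c : E} {q : E → ℝ}

lemma MeasureTheory.Integrable.affinePullback (hΦ : Φ.det ≠ 0) (hq : Integrable q μ) :
    Integrable (affinePullback Φ c q) μ :=
  (hq.comp_affine μ hΦ c).const_mul _

lemma integral_abs_affinePullback (hΦ : Φ.det ≠ 0) (hq : AEStronglyMeasurable q μ) :
    ∫ w, |affinePullback Φ c q w| ∂μ = ∫ w, |q w| ∂μ := by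
  simp_rw [affinePullback, abs_mul, abs_abs]
  rw [integral_const_mul, integral_comp_affine μ hΦ c (h := fun z => |q z|) hq.norm,
    mul_inv_cancel_left₀ (abs_ne_zero.mpr hΦ)]

lemma map_withDensity_affinePullback (hΦ : Φ.det ≠ 0) (hq : Measurable q) :
    (μ.withDensity fun w => ENNReal.ofReal (affinePullback Φ c q w)).map (fun w => Φ w + c) =
      μ.withDensity fun z => ENNReal.ofReal (q z) := by
  have hT : Measurable fun w => Φ w + c := by fun_prop
  have hdet : ENNReal.ofReal |Φ.det| * ENNReal.ofReal |Φ.det|⁻¹ = 1 := by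
    rw [← ENNReal.ofReal_mul (abs_nonneg _), mul_inv_cancel₀ (abs_ne_zero.mpr hΦ),
      ENNReal.ofReal_one]
  ext s hs
  simp_rw [Measure.map_apply hT hs, withDensity_apply _ (hT hs), withDensity_apply _ hs,
    affinePullback, ENNReal.ofReal_mul (abs_nonneg _)]
  rw [lintegral_const_mul' _ _ ENNReal.ofReal_ne_top,
    ← setLIntegral_map hs hq.ennreal_ofReal hT, map_affine_addHaar μ hΦ, Measure.restrict_smul,
    lintegral_smul_measure, smul_eq_mul, ← mul_assoc, hdet, one_mul]

lemma tvDist_map_withDensity_le_of_comp_affine {F : Type*} [MeasurableSpace F]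
    (hq : Measurable q) (hq0 : ∀ z, 0 ≤ q z) (hqi : Integrable q μ) {h h' : E → F}
    (hh : Measurable h) (hh' : Measurable h') (hΦ : Φ.det ≠ 0)
    (hcomp : ∀ w, h (Φ w + c) = h' w) :
    tvDist ((μ.withDensity fun z => ENNReal.ofReal (q z)).map h)
        ((μ.withDensity fun z => ENNReal.ofReal (q z)).map h') ≤
      ∫ w, |affinePullback Φ c q w - q w| ∂μ := by
  have hT : Measurable fun w => Φ w + c := Φ.measurable.add_const c
  have hρ : (μ.withDensity fun z => ENNReal.ofReal (q z)).map h =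
      (μ.withDensity fun w => ENNReal.ofReal (affinePullback Φ c q w)).map h' := by
    rw [← map_withDensity_affinePullback hΦ hq, Measure.map_map hh hT]
    simp only [Function.comp_def, hcomp]
  rw [hρ]
  exact tvDist_map_withDensity_le μ hh' ((hq.comp hT).const_mul _) hq
    (fun w => mul_nonneg (abs_nonneg _) (hq0 _)) hq0 (hqi.affinePullback hΦ) hqi

end AffinePullback

section AffineMapsNearIdentity

variable {E : Type*} [NormedAddCommGroup E] [NormedSpace ℝ E]

lemma norm_le_of_norm_sub_one_le {Φ : E →L[ℝ] E} (hΦ : ‖Φ - 1‖ ≤ 1 / 2) {c : E}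
    (hc : ‖c‖ ≤ 1) (w : E) : ‖w‖ ≤ 2 * (‖Φ w + c‖ + 1) := by
  have hw : w = (Φ w + c) - (Φ - 1) w - c := by simp
  have := (Φ - 1).le_opNorm w
  have := norm_sub_le (Φ w + c - (Φ - 1) w) c
  have := norm_sub_le (Φ w + c) ((Φ - 1) w)
  rw [← hw] at *
  nlinarith [norm_nonneg w]

variable {ι : Type*} {l : Filter ι} {Φ : ι → E →L[ℝ] E} {c : ι → E}

lemma tendsto_det_of_tendsto_one (hΦ : Tendsto Φ l (𝓝 1)) :
    Tendsto (fun i => (Φ i).det) l (𝓝 1) := by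
  simpa [Function.comp_def, ContinuousLinearMap.det] using
    (ContinuousLinearMap.continuous_det.tendsto 1).comp hΦ

lemma tendsto_affinePullback (hΦ : Tendsto Φ l (𝓝 1)) (hc : Tendsto c l (𝓝 0)) {g : E → ℝ}
    (hg : Continuous g) (w : E) :
    Tendsto (fun i => affinePullback (Φ i) (c i) g w) l (𝓝 (g w)) := by
  have hw : Tendsto (fun i => Φ i w + c i) l (𝓝 w) := by
    simpa using (((ContinuousLinearMap.apply ℝ E w).continuous.tendsto 1).comp hΦ).add hc
  simpa [affinePullback] using (tendsto_det_of_tendsto_one hΦ).abs.mul ((hg.tendsto w).comp hw)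

end AffineMapsNearIdentity

section ContinuityOfAffinePullback

variable {E : Type*} [NormedAddCommGroup E] [NormedSpace ℝ E] [FiniteDimensional ℝ E]
  [MeasurableSpace E] [BorelSpace E] {μ : Measure E} [μ.IsAddHaarMeasure]
  {ι : Type*} {l : Filter ι} [l.IsCountablyGenerated] {Φ : ι → E →L[ℝ] E} {c : ι → E}

lemma tendsto_integral_abs_affinePullback_sub_of_hasCompactSupport
    (hΦ : Tendsto Φ l (𝓝 1)) (hc : Tendsto c l (𝓝 0)) {g : E → ℝ}
    (hg : Continuous g) (hgc : HasCompactSupport g) :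
    Tendsto (fun i => ∫ w, |affinePullback (Φ i) (c i) g w - g w| ∂μ) l (𝓝 0) := by
  obtain ⟨r, hr0, hr⟩ := hgc.isCompact.isBounded.subset_closedBall_lt 0 0
  obtain ⟨G, hG⟩ := hg.bounded_above_of_compact_support hgc
  have hG' (z : E) : |g z| ≤ G := (Real.norm_eq_abs _).symm.trans_le (hG z)
  have hg_zero {z : E} (hz : r < ‖z‖) : g z = 0 :=
    image_eq_zero_of_notMem_tsupport fun h => by
      have := hr h
      rw [Metric.mem_closedBall, dist_zero_right] at this
      linarith
  have hbound : ∀ᶠ i in l, ∀ w, |affinePullback (Φ i) (c i) g w - g w| ≤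
      (Metric.closedBall (0 : E) (2 * (r + 1))).indicator (fun _ => 3 * G) w := by
    have hΦ' : ∀ᶠ i in l, ‖Φ i - 1‖ ≤ 1 / 2 :=
      (tendsto_iff_norm_sub_tendsto_zero.mp hΦ).eventually_le_const (by norm_num)
    have hc' : ∀ᶠ i in l, ‖c i‖ ≤ 1 := hc.norm.eventually_le_const (by simp)
    have hdet : ∀ᶠ i in l, |(Φ i).det| ≤ 2 :=
      (tendsto_det_of_tendsto_one hΦ).abs.eventually_le_const (by norm_num)
    filter_upwards [hΦ', hc', hdet] with i hΦi hci hdeti w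
    by_cases hw : w ∈ Metric.closedBall (0 : E) (2 * (r + 1))
    · rw [Set.indicator_of_mem hw]
      calc |affinePullback (Φ i) (c i) g w - g w|
          ≤ |(Φ i).det| * |g (Φ i w + c i)| + |g w| :=
            (abs_sub _ _).trans_eq (by rw [affinePullback, abs_mul, abs_abs])
        _ ≤ 2 * G + G := by gcongr <;> exact hG' _
        _ = 3 * G := by ring
    · rw [Metric.mem_closedBall, dist_zero_right, not_le] at hw
      have := norm_le_of_norm_sub_one_le hΦi hci w
      rw [Set.indicator_of_notMem (by simpa using hw), affinePullback,
        hg_zero (by linarith : r < ‖Φ i w + c i‖), hg_zero (by linarith : r < ‖w‖)]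
      simp
  have := tendsto_integral_filter_of_dominated_convergence (μ := μ)
    (F := fun i w => |affinePullback (Φ i) (c i) g w - g w|) (f := fun _ => 0)
    _ (Eventually.of_forall fun i => ((continuous_const.mul (hg.comp
      ((Φ i).continuous.add continuous_const))).sub hg).abs.aestronglyMeasurable)
    (hbound.mono fun i hi => ae_of_all _ fun w => (Real.norm_eq_abs _).trans_le <| by
      rw [abs_abs]; exact hi w)
    ((integrableOn_const measure_closedBall_lt_top.ne).integrable_indicator
      Metric.isClosed_closedBall.measurableSet)
    (ae_of_all _ fun w => by
      simpa using ((tendsto_affinePullback hΦ hc hg w).sub_const (g w)).abs)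
  rwa [integral_zero] at this

theorem tendsto_integral_abs_affinePullback_sub (hΦ : Tendsto Φ l (𝓝 1))
    (hc : Tendsto c l (𝓝 0)) {q : E → ℝ} (hq : Integrable q μ) :
    Tendsto (fun i => ∫ w, |affinePullback (Φ i) (c i) q w - q w| ∂μ) l (𝓝 0) := by
  rw [Metric.tendsto_nhds]
  intro ε hε
  obtain ⟨g, hgc, hqg, hg, hgi⟩ :=
    hq.exists_hasCompactSupport_integral_sub_le (by positivity : 0 < ε / 4)
  simp_rw [Real.norm_eq_abs] at hqg
  filter_upwards [(tendsto_det_of_tendsto_one hΦ).eventually_ne one_ne_zero,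
    (tendsto_integral_abs_affinePullback_sub_of_hasCompactSupport (μ := μ) hΦ hc hg
      hgc).eventually_lt_const (by positivity : 0 < ε / 2)] with i hdet hg_close
  rw [Real.dist_0_eq_abs, abs_of_nonneg (integral_nonneg fun _ => abs_nonneg _)]
  set T := affinePullback (Φ i) (c i)
  have hqg_int : Integrable (fun w => |q w - g w|) μ := (hq.sub hgi).abs
  have hTg_int : Integrable (fun w => |T g w - g w|) μ :=
    ((hgi.affinePullback hdet).sub hgi).abs
  have hTqg_int : Integrable (fun w => |T (q - g) w|) μ := ((hq.sub hgi).affinePullback hdet).abs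
  calc ∫ w, |T q w - q w| ∂μ
      ≤ ∫ w, (|T (q - g) w| + |T g w - g w| + |q w - g w|) ∂μ := by
        refine integral_mono ((hq.affinePullback hdet).sub hq).abs
          ((hTqg_int.add hTg_int).add hqg_int) fun w => ?_
        have : T q w - q w = T (q - g) w + (T g w - g w) - (q w - g w) := by
          simp only [T, affinePullback, Pi.sub_apply]; ring
        rw [this]
        exact (abs_sub _ _).trans (add_le_add (abs_add_le _ _) le_rfl)
    _ = 2 * ∫ w, |q w - g w| ∂μ + ∫ w, |T g w - g w| ∂μ := by
        rw [integral_add (f := fun w => |T (q - g) w| + |T g w - g w|) (hTqg_int.add hTg_int)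
          hqg_int, integral_add hTqg_int hTg_int,
          integral_abs_affinePullback hdet (hq.sub hgi).aestronglyMeasurable, Pi.sub_def]
        ring
    _ < ε := by linarith

end ContinuityOfAffinePullback

lemma UniformContinuous.tendsto_sub_nhds_zero {G H : Type*} [AddGroup G] [UniformSpace G]
    [IsUniformAddGroup G] [AddGroup H] [UniformSpace H] [IsUniformAddGroup H] {f : G → H}
    (hf : UniformContinuous f) {ι : Type*} {l : Filter ι} {x y : ι → G}
    (h : Tendsto (fun i => y i - x i) l (𝓝 0)) :
    Tendsto (fun i => f (y i) - f (x i)) l (𝓝 0) := by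
  have hxy : Tendsto (fun i => (x i, y i)) l (uniformity G) := by
    rwa [uniformity_eq_comap_nhds_zero, tendsto_comap_iff]
  have := Tendsto.comp hf hxy
  rwa [uniformity_eq_comap_nhds_zero, tendsto_comap_iff] at this

lemma ContinuousLinearMap.exists_equiv_norm_symm_le {E : Type*} [NormedAddCommGroup E]
    [NormedSpace ℝ E] [FiniteDimensional ℝ E] {A : E →L[ℝ] E} {α : ℝ} (hα : 0 < α)
    (hA : ∀ v, α * ‖v‖ ≤ ‖A v‖) :
    ∃ e : E ≃L[ℝ] E, (e : E →L[ℝ] E) = A ∧ ‖(e.symm : E →L[ℝ] E)‖ ≤ α⁻¹ := by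
  have hinj : Function.Injective A := by
    refine (injective_iff_map_eq_zero A).mpr fun v hv => norm_le_zero_iff.mp ?_
    have := hA v
    rw [hv, norm_zero] at this
    nlinarith [norm_nonneg v]
  let e := (LinearEquiv.ofInjectiveEndo (A : E →ₗ[ℝ] E) hinj).toContinuousLinearEquiv
  refine ⟨e, rfl, ContinuousLinearMap.opNorm_le_bound _ (inv_nonneg.mpr hα.le) fun v => ?_⟩
  have := hA (e.symm v)
  rw [show A (e.symm v) = v from e.apply_symm_apply v] at this
  rw [ContinuousLinearEquiv.coe_coe, inv_mul_eq_div, le_div_iff₀' hα]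
  exact this

theorem tendsto_tvDist_map_affine_withDensity {E : Type*} [NormedAddCommGroup E]
    [NormedSpace ℝ E] [FiniteDimensional ℝ E] [MeasurableSpace E] [BorelSpace E]
    (μ : Measure E) [μ.IsAddHaarMeasure] {q : E → ℝ} (hq : Measurable q) (hq0 : ∀ z, 0 ≤ q z)
    (hqi : Integrable q μ) {ι : Type*} {l : Filter ι} [l.IsCountablyGenerated]
    {A B : ι → E →L[ℝ] E} {a b : ι → E} {α : ℝ} (hα : 0 < α)
    (hA : ∀ i v, α * ‖v‖ ≤ ‖A i v‖) (hAB : Tendsto (fun i => B i - A i) l (𝓝 0))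
    (hab : Tendsto (fun i => b i - a i) l (𝓝 0)) :
    Tendsto (fun i => tvDist ((μ.withDensity fun z => ENNReal.ofReal (q z)).map
        fun z => a i + A i z) ((μ.withDensity fun z => ENNReal.ofReal (q z)).map
        fun z => b i + B i z)) l (𝓝 0) := by
  choose e he_coe he_symm using fun i => (A i).exists_equiv_norm_symm_le hα (hA i)
  set Φ := fun i => ((e i).symm : E →L[ℝ] E) ∘L B i
  set c := fun i => (e i).symm (b i - a i)
  have hΦ : Tendsto Φ l (𝓝 1) := by
    have hΦ_sub (i : ι) : Φ i - 1 = ((e i).symm : E →L[ℝ] E) ∘L (B i - A i) := by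
      ext v; simp [Φ, ← he_coe i]
    rw [tendsto_iff_norm_sub_tendsto_zero]
    refine squeeze_zero_norm (fun i => ?_) (by simpa using hAB.norm.const_mul α⁻¹)
    rw [norm_norm, hΦ_sub]
    exact (ContinuousLinearMap.opNorm_comp_le _ _).trans
      (mul_le_mul_of_nonneg_right (he_symm i) (norm_nonneg _))
  have hc : Tendsto c l (𝓝 0) :=
    squeeze_zero_norm (fun i => ((e i).symm : E →L[ℝ] E).le_of_opNorm_le (he_symm i) _)
      (by simpa using hab.norm.const_mul α⁻¹)
  refine squeeze_zero' (Eventually.of_forall fun i => tvDist_nonneg _ _) ?_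
    (tendsto_integral_abs_affinePullback_sub hΦ hc hqi)
  filter_upwards [(tendsto_det_of_tendsto_one hΦ).eventually_ne one_ne_zero] with i hdet
  refine tvDist_map_withDensity_le_of_comp_affine hq hq0 hqi (by fun_prop) (by fun_prop) hdet
    fun w => ?_
  simp only [Φ, c, ← he_coe i, ContinuousLinearMap.comp_apply, ContinuousLinearEquiv.coe_coe,
    map_add, ContinuousLinearEquiv.apply_symm_apply]
  abel

/-- For the signal recursion `X_{k+1} = b(X_k) + σ(X_k) η_k` with `b, σ`
uniformly continuous, `σ` uniformly bounded below (`‖σ(x)v‖ ≥ α‖v‖` for some `α > 0`), and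
i.i.d. noise `η_k` with density `q_η` w.r.t. Lebesgue measure, the associated transition
kernel `P(x,·) = law of b(x) + σ(x) η_0` satisfies
`‖P(x_k,·) − P(y_k,·)‖_TV → 0` whenever `‖x_k − y_k‖ → 0`. -/
theorem transition_kernel_TV_uniformly_continuous
    {m : ℕ}
    (b : (Fin m → ℝ) → (Fin m → ℝ)) (σ : (Fin m → ℝ) → Matrix (Fin m) (Fin m) ℝ)
    (hb : UniformContinuous b) (hσ : UniformContinuous σ)
    (α : ℝ) (hα : 0 < α) (hlow : ∀ x v, α * ‖v‖ ≤ ‖(σ x).mulVec v‖)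
    (qη : (Fin m → ℝ) → ℝ) (hqη : Measurable qη) (hqη0 : ∀ z, 0 ≤ qη z)
    (hqη1 : ∫⁻ z, ENNReal.ofReal (qη z) = 1)
    (P : (Fin m → ℝ) → Measure (Fin m → ℝ))
    (hPdef : ∀ x, P x = Measure.map (fun z => b x + (σ x).mulVec z)
      (volume.withDensity fun z => ENNReal.ofReal (qη z)))
    (x y : ℕ → (Fin m → ℝ))
    (hxy : Tendsto (fun k => ‖x k - y k‖) atTop (𝓝 0)) :
    Tendsto (fun k => tvDist (P (x k)) (P (y k))) atTop (𝓝 0) := by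
  have hqi : Integrable qη := by
    have := integrable_toReal_of_lintegral_ne_top (μ := volume) hqη.ennreal_ofReal.aemeasurable
      (by simp [hqη1])
    simpa [ENNReal.toReal_ofReal (hqη0 _)] using this
  let L : Matrix (Fin m) (Fin m) ℝ →L[ℝ] (Fin m → ℝ) →L[ℝ] (Fin m → ℝ) :=
    LinearMap.toContinuousLinearMap
      (LinearMap.toContinuousLinearMap.toLinearMap ∘ₗ Matrix.toLin'.toLinearMap)
  have hL (M : Matrix (Fin m) (Fin m) ℝ) (v : Fin m → ℝ) : L M v = M.mulVec v := rfl
  have hyx : Tendsto (fun k => y k - x k) atTop (𝓝 0) := by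
    rw [tendsto_zero_iff_norm_tendsto_zero]; simpa [norm_sub_rev] using hxy
  simp_rw [hPdef, ← hL]
  exact tendsto_tvDist_map_affine_withDensity volume hqη hqη0 hqi hα (fun k => hlow (x k))
    ((L.uniformContinuous.comp hσ).tendsto_sub_nhds_zero hyx) (hb.tendsto_sub_nhds_zero hyx)

end
end

section
/- Let α, β, σ ∈ ℝ with σ ≠ 0, let x ∈ ℝ, and let (c_k) be a real sequence with c_k → x. Define u_k = α/(1 + σ²(k+1)) + c_k and w_k = β/(1 + σ²(k+1)) + c_k. Then k · |cos(u_k) − cos(w_k)| → (|β − α|/σ²) · |sin(x)| as k → ∞. In particular, if sin(x) ≠ 0 and α ≠ β, then liminf_k k·|cos(u_k) − cos(w_k)| > 0, so |cos(u_k) − cos(w_k)| decays no faster than order 1/k. -/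
/-!
Since `cos` is strictly differentiable at `x` with derivative `-sin x` and both `u k`, `w k` tend
to `x`, we have `cos (u k) - cos (w k) = -sin x * (u k - w k) + o(u k - w k)`; and
`k * (u k - w k) = (α - β) * k / (1 + σ ^ 2 * (k + 1))` tends to `(α - β) / σ ^ 2`.
-/

open Filter Real Asymptotics
open scoped Topology

theorem HasStrictDerivAt.tendsto_smul_sub {𝕜 F ι : Type*} [NontriviallyNormedField 𝕜]
    [NormedAddCommGroup F] [NormedSpace 𝕜 F] {f : 𝕜 → F} {f' : F} {x L : 𝕜} {l : Filter ι}
    {r u w : ι → 𝕜} (hf : HasStrictDerivAt f f' x) (hu : Tendsto u l (𝓝 x))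
    (hw : Tendsto w l (𝓝 x)) (hr : Tendsto (fun k => r k * (u k - w k)) l (𝓝 L)) :
    Tendsto (fun k => r k • (f (u k) - f (w k))) l (𝓝 (L • f')) := by
  have hrem : (fun k => f (u k) - f (w k) - (u k - w k) • f') =o[l] fun k => u k - w k :=
    (hasDerivAtFilter_iff_isLittleO.mp hf).comp_tendsto (hu.prodMk_nhds hw)
  have hscaled : Tendsto (fun k => r k • (f (u k) - f (w k) - (u k - w k) • f')) l (𝓝 0) :=
    isLittleO_one_iff 𝕜 |>.mp <|
      ((isBigO_refl r l).smul_isLittleO hrem).trans_isBigO (hr.isBigO_one 𝕜)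
  simpa [smul_sub, smul_smul] using hscaled.add (hr.smul_const f')

theorem tendsto_add_mul_div_add_mul_succ_atTop_nhds (a b c : ℝ) {d : ℝ} (hd : d ≠ 0) :
    Tendsto (fun k : ℕ => (a + c * k) / (b + d * (k + 1))) atTop (𝓝 (c / d)) :=
  (tendsto_add_mul_div_add_mul_atTop_nhds a (b + d) c hd).congr fun k => by ring

/-- Let `σ ≠ 0`, `c_k → x`, and set
`u_k = α/(1 + σ²(k+1)) + c_k`, `w_k = β/(1 + σ²(k+1)) + c_k`.  Then
`k·|cos u_k − cos w_k| → (|β − α|/σ²)·|sin x|`; in particular, if `sin x ≠ 0` and `α ≠ β`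
then `liminf_k k·|cos u_k − cos w_k| > 0`, so the difference decays no faster than `1/k`. -/
theorem cos_difference_rate
    (α β σ x : ℝ) (hσ : σ ≠ 0) (c : ℕ → ℝ) (hc : Tendsto c atTop (𝓝 x))
    (u w : ℕ → ℝ)
    (hu : ∀ k, u k = α / (1 + σ ^ 2 * (k + 1)) + c k)
    (hw : ∀ k, w k = β / (1 + σ ^ 2 * (k + 1)) + c k) :
    Tendsto (fun k : ℕ => (k : ℝ) * |Real.cos (u k) - Real.cos (w k)|)
      atTop (𝓝 (|β - α| / σ ^ 2 * |Real.sin x|)) ∧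
    (Real.sin x ≠ 0 → α ≠ β →
      0 < Filter.liminf (fun k : ℕ => (k : ℝ) * |Real.cos (u k) - Real.cos (w k)|) atTop) := by
  have hσ2 : σ ^ 2 ≠ 0 := pow_ne_zero 2 hσ
  have tendsto_shift (a : ℝ) :
      Tendsto (fun k : ℕ => a / (1 + σ ^ 2 * (k + 1)) + c k) atTop (𝓝 x) := by
    simpa using (tendsto_add_mul_div_add_mul_succ_atTop_nhds a 1 0 hσ2).add hc
  have hu_lim : Tendsto u atTop (𝓝 x) := (tendsto_shift α).congr fun k => (hu k).symm
  have hw_lim : Tendsto w atTop (𝓝 x) := (tendsto_shift β).congr fun k => (hw k).symm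
  have hgap : Tendsto (fun k : ℕ => (k : ℝ) * (u k - w k)) atTop (𝓝 ((α - β) / σ ^ 2)) := by
    refine (tendsto_add_mul_div_add_mul_succ_atTop_nhds 0 1 (α - β) hσ2).congr fun k => ?_
    rw [hu, hw]
    ring
  have hmain : Tendsto (fun k : ℕ => (k : ℝ) * |Real.cos (u k) - Real.cos (w k)|)
      atTop (𝓝 (|β - α| / σ ^ 2 * |Real.sin x|)) := by
    simpa [abs_mul, abs_div, abs_sub_comm α β] using
      ((hasStrictDerivAt_cos x).tendsto_smul_sub hu_lim hw_lim hgap).abs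
  refine ⟨hmain, fun hsin hαβ => ?_⟩
  rw [hmain.liminf_eq]
  have hgap_pos : 0 < |β - α| := abs_pos.mpr (sub_ne_zero.mpr hαβ.symm)
  positivity
end
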